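/- arXiv:1105.4320 — 5 statements merged into one kernel-verified Lean document; each statement's English description precedes it below -/
import Mathlib

section
/- Let p be a prime, H a finite p-group, and F_q a finite field of characteristic different from p. Let S ⊆ Sym(H) be a set of permutations of H that is a solving set for every F_q-colored Cayley digraph cay(H,e), e : H → F_q. Then S is a solving set for every right ideal I of F_q[H]. -/
/-- Convolution product on the group algebra `F[H]`. -/
def convolve {H F : Type*} [Group H] [Fintype H] [Field F] (f g : H → F) : H → F :=
  fun x => ∑ y : H, f y * g (y⁻¹ * x)

/-- Action of a permutation `g` on functions: `f^g (x) = f (x^{g⁻¹})`. -/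
def permAct {Ω F : Type*} (g : Equiv.Perm Ω) (f : Ω → F) : Ω → F :=
  fun x => f (g.symm x)

/-- `g` is an isomorphism from the colored Cayley digraph `cay(H,e)` to `cay(H,e')`. -/
def IsCayleyIso {H F : Type*} [Group H] (g : Equiv.Perm H) (e e' : H → F) : Prop :=
  ∀ x y : H, e' (g x * (g y)⁻¹) = e (x * y⁻¹)

/-- A submodule of `F[H]` is a right ideal if it is closed under right convolution. -/
def IsRightIdeal {H F : Type*} [Group H] [Fintype H] [Field F]
    (I : Submodule F (H → F)) : Prop :=
  ∀ a ∈ I, ∀ b : H → F, convolve a b ∈ I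

/-!
Write `J = I^g` and let `R ≅ H` be the group of right translations of `H`. Being right ideals,
`I` and `J` are stable under `R`, so the stabilizer `K` of `I` in `Sym(H)` contains the
`p`-groups `R` and `g⁻¹ R g`. By Sylow's theorem in `K`, after replacing `g` by `g k` with
`k ∈ K`, both lie in one `p`-subgroup `Q ≤ K`. Since `|Q|` is invertible in `F`, Maschke's
theorem gives a `Q`-equivariant projection `π` of `F[H]` onto `I`. Commuting with `R`, `π` is
left multiplication by some `e`, and its conjugate by `g`, a projection onto `J` commuting with
`R`, is left multiplication by some `f`; this intertwining says exactly that `g` is an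
isomorphism `cay(H,e) → cay(H,f)`. A permutation `s ∈ S` that is also such an isomorphism
intertwines the two multiplications as well, hence maps `I = e F[H]` onto `f F[H] = J`.
-/

open Pointwise

theorem Representation.exists_isProj_commute {k G V : Type*} [Field k] [Group G] [Finite G]
    [NeZero (Nat.card G : k)] [AddCommGroup V] [Module k V] (ρ : Representation k G V)
    (W : Submodule k V) (hW : ∀ g, ∀ v ∈ W, ρ g v ∈ W) :
    ∃ π : V →ₗ[k] V, LinearMap.IsProj W π ∧ ∀ g, Commute π (ρ g) := by
  obtain ⟨W', hW'⟩ := exists_isCompl (⟨W, hW⟩ : Subrepresentation ρ)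
  have hc : IsCompl W W'.toSubmodule :=
    ⟨disjoint_iff.2 (congrArg Subrepresentation.toSubmodule hW'.inf_eq_bot),
      codisjoint_iff.2 (congrArg Subrepresentation.toSubmodule hW'.sup_eq_top)⟩
  refine ⟨W.projection W'.toSubmodule hc,
    ⟨W.projection_apply_mem hc, fun v hv => W.projection_apply_of_mem_left hc hv⟩,
    fun g => ?_⟩
  rw [LinearMap.IsIdempotentElem.commute_iff (W.isIdempotentElem_projection hc),
    W.range_projection, W.ker_projection, Module.End.mem_invtSubmodule,
    Module.End.mem_invtSubmodule]
  exact ⟨fun v hv => hW g v hv, fun v hv => W'.apply_mem_toSubmodule g hv⟩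

theorem Representation.commute_conj {k G V : Type*} [CommSemiring k] [Group G] [AddCommMonoid V]
    [Module k V] (ρ : Representation k G V) {π : V →ₗ[k] V} {q : G} (h : Commute π (ρ q))
    (g : G) : Commute (ρ g * π * ρ g⁻¹) (ρ (g * q * g⁻¹)) := by
  have hg : ρ g⁻¹ * ρ g = 1 := by rw [← map_mul, inv_mul_cancel, map_one]
  simp only [Commute, SemiconjBy, map_mul, mul_assoc, ← mul_assoc (ρ g⁻¹) (ρ g), hg, one_mul]
  rw [← mul_assoc π, h.eq, mul_assoc]

theorem Subgroup.exists_isPGroup_le_and_le_conj_smul {G : Type*} [Group G] [Finite G] {p : ℕ}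
    [Fact p.Prime] {K A B : Subgroup G} (hA : IsPGroup p A) (hB : IsPGroup p B)
    (hAK : A ≤ K) (hBK : B ≤ K) :
    ∃ Q ≤ K, IsPGroup p Q ∧ A ≤ Q ∧ ∃ k ∈ K, B ≤ MulAut.conj k • Q := by
  obtain ⟨P, hP⟩ := (hA.comap_of_injective K.subtype K.subtype_injective).exists_le_sylow
  obtain ⟨P', hP'⟩ := (hB.comap_of_injective K.subtype K.subtype_injective).exists_le_sylow
  obtain ⟨k, rfl⟩ := MulAction.exists_smul_eq K P P'
  refine ⟨(P : Subgroup K).map K.subtype, K.map_subtype_le _, P.isPGroup'.map _,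
    fun a ha => ⟨⟨a, hAK ha⟩, hP ha, rfl⟩, k, k.2, fun b hb => ?_⟩
  obtain ⟨x, hx, hxb⟩ := (Subgroup.mem_smul_pointwise_iff_exists _ _ _).1
    (hP' (show (⟨b, hBK hb⟩ : K) ∈ B.comap K.subtype from hb))
  refine (Subgroup.mem_smul_pointwise_iff_exists _ _ _).2 ⟨x, ⟨x, hx, rfl⟩, ?_⟩
  simpa [MulAut.smul_def, Subtype.ext_iff] using hxb

theorem IsPGroup.natCast_card_ne_zero {F : Type*} [Ring F] [IsDomain F] {p : ℕ} (hp : p.Prime)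
    (hchar : ringChar F ≠ p) {G : Type*} [Group G] [Finite G] (hG : IsPGroup p G) :
    (Nat.card G : F) ≠ 0 := by
  have : Fact p.Prime := ⟨hp⟩
  obtain ⟨n, hn⟩ := IsPGroup.iff_card.1 hG
  rw [hn, Nat.cast_pow]
  exact pow_ne_zero n fun h => hchar (CharP.ringChar_of_prime_eq_zero hp h)

-- With this action `g • f = permAct g f` holds by definition.
attribute [local instance] arrowAction

lemma image_permAct {Ω F : Type*} (g : Equiv.Perm Ω) (s : Set (Ω → F)) :
    permAct g '' s = g • s := rfl

lemma Equiv.Perm.smul_single {Ω F : Type*} [DecidableEq Ω] [Zero F] (g : Equiv.Perm Ω) (a : Ω)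
    (c : F) :
    g • (Pi.single a c : Ω → F) = Pi.single (g a) c := by
  funext x
  show (Pi.single a c : Ω → F) (g⁻¹ x) = _
  simp [Pi.single_apply, Equiv.symm_apply_eq]

lemma Equiv.Perm.smul_fun_apply {Ω F : Type*} (g : Equiv.Perm Ω) (v : Ω → F) (x : Ω) :
    (g • v) x = v (g⁻¹ x) := rfl

def permRep (F Ω : Type*) [CommSemiring F] : Representation F (Equiv.Perm Ω) (Ω → F) where
  toFun g := { toFun := (g • ·), map_add' := fun _ _ => rfl, map_smul' := fun _ _ => rfl }
  map_one' := LinearMap.ext (one_smul _)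
  map_mul' g h := LinearMap.ext (mul_smul g h)

lemma coe_permRep {F Ω : Type*} [CommSemiring F] (g : Equiv.Perm Ω) :
    ⇑(permRep F Ω g) = (g • ·) := rfl

@[simp]
lemma permRep_apply {F Ω : Type*} [CommSemiring F] (g : Equiv.Perm Ω) (v : Ω → F) :
    permRep F Ω g v = g • v := rfl

def rightTranslations (H : Type*) [Group H] : Subgroup (Equiv.Perm H) :=
  (MulAction.toPermHom Hᵐᵒᵖ H).range

section

variable {H : Type*} [Group H]

lemma mem_rightTranslations {σ : Equiv.Perm H} :
    σ ∈ rightTranslations H ↔ ∃ h : H, Equiv.mulRight h = σ :=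
  ⟨fun ⟨h, hσ⟩ => ⟨h.unop, hσ ▸ by ext; simp⟩,
    fun ⟨h, hσ⟩ => ⟨MulOpposite.op h, hσ ▸ by ext; simp⟩⟩

lemma mulRight_mem_rightTranslations (h : H) : Equiv.mulRight h ∈ rightTranslations H :=
  mem_rightTranslations.2 ⟨h, rfl⟩

lemma IsPGroup.rightTranslations {p : ℕ} (hH : IsPGroup p H) : IsPGroup p (rightTranslations H) :=
  (hH.of_equiv (MulEquiv.inv' H)).of_surjective _ (MonoidHom.rangeRestrict_surjective _)

variable [Fintype H] {F : Type*} [Field F]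

lemma convolve_single [DecidableEq H] (v : H → F) (h : H) (c : F) :
    convolve v (Pi.single h c) = Equiv.mulRight h • (c • v) := by
  funext x
  show ∑ y, v y * (Pi.single h c : H → F) (y⁻¹ * x) = c * v (x * h⁻¹)
  rw [Finset.sum_eq_single (x * h⁻¹)]
  · simp [mul_comm]
  · intro y _ hy
    rw [Pi.single_apply, if_neg, mul_zero]
    rintro rfl
    exact hy (by group)
  · simp

def leftConvolve (e : H → F) : (H → F) →ₗ[F] (H → F) where
  toFun := convolve e
  map_add' a b := by
    funext x
    simp [convolve, mul_add, Finset.sum_add_distrib]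
  map_smul' c a := by
    funext x
    simp [convolve, Finset.mul_sum, mul_left_comm]

@[simp]
lemma coe_leftConvolve (e : H → F) : ⇑(leftConvolve e) = convolve e := rfl

lemma IsRightIdeal.rightTranslations_le_stabilizer {I : Submodule F (H → F)}
    (hI : IsRightIdeal I) :
    rightTranslations H ≤ MulAction.stabilizer (Equiv.Perm H) (I : Set (H → F)) := by
  classical
  have hmem : ∀ σ ∈ rightTranslations H, ∀ v ∈ I, σ • v ∈ I := by
    intro σ hσ v hv
    obtain ⟨h, rfl⟩ := mem_rightTranslations.1 hσ
    simpa [convolve_single] using hI v hv (Pi.single h 1)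
  refine fun σ hσ => MulAction.mem_stabilizer_set.2 fun v => ⟨fun hv => ?_, hmem σ hσ v⟩
  simpa using hmem σ⁻¹ (inv_mem hσ) _ hv

lemma eq_leftConvolve_of_commute [DecidableEq H] (T : (H → F) →ₗ[F] (H → F))
    (hT : ∀ h : H, Commute T (permRep F H (Equiv.mulRight h))) :
    T = leftConvolve (T (Pi.single 1 1)) := by
  refine LinearMap.pi_ext fun h c => ?_
  calc T (Pi.single h c)
      = T (Equiv.mulRight h • Pi.single 1 c) := by
        simp only [Equiv.Perm.smul_single, Equiv.coe_mulRight, one_mul]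
    _ = Equiv.mulRight h • T (Pi.single 1 c) := LinearMap.congr_fun (hT h).eq _
    _ = Equiv.mulRight h • (c • T (Pi.single 1 1)) := by
        rw [← T.map_smul, ← Pi.single_smul', smul_eq_mul, mul_one]
    _ = leftConvolve (T (Pi.single 1 1)) (Pi.single h c) := (convolve_single _ _ _).symm

lemma isCayleyIso_iff (g : Equiv.Perm H) (e f : H → F) :
    IsCayleyIso g e f ↔
      permRep F H g ∘ₗ leftConvolve e = leftConvolve f ∘ₗ permRep F H g := by
  classical
  simp only [LinearMap.pi_ext_iff, LinearMap.comp_apply, permRep_apply, coe_leftConvolve,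
    Equiv.Perm.smul_single, convolve_single, funext_iff, Equiv.Perm.smul_fun_apply, Pi.smul_apply,
    Equiv.Perm.inv_def, Equiv.mulRight_symm, Equiv.coe_mulRight, smul_eq_mul]
  refine ⟨fun h y c x => ?_, fun h x y => ?_⟩
  · rw [← h (g.symm x) y, Equiv.apply_symm_apply]
  · simpa using (h y 1 (g x)).symm

lemma IsCayleyIso.smul_range_convolve {g : Equiv.Perm H} {e f : H → F} (h : IsCayleyIso g e f) :
    g • Set.range (convolve e) = Set.range (convolve f) := by
  have hcomp := congrArg DFunLike.coe ((isCayleyIso_iff g e f).1 h)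
  simp only [LinearMap.coe_comp, coe_leftConvolve] at hcomp
  rw [← Set.image_smul, ← Set.range_comp]
  exact hcomp ▸ (MulAction.surjective g).range_comp _

theorem exists_isCayleyIso_of_le_stabilizer (I : Submodule F (H → F)) (g : Equiv.Perm H)
    (Q : Subgroup (Equiv.Perm H)) [NeZero (Nat.card Q : F)]
    (hQI : Q ≤ MulAction.stabilizer (Equiv.Perm H) (I : Set (H → F)))
    (hRQ : rightTranslations H ≤ Q) (hRQg : rightTranslations H ≤ MulAut.conj g • Q) :
    ∃ e f : H → F, (I : Set (H → F)) = Set.range (convolve e) ∧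
      g • (I : Set (H → F)) = Set.range (convolve f) ∧ IsCayleyIso g e f := by
  classical
  obtain ⟨π, hπI, hπQ⟩ :=
    Representation.exists_isProj_commute ((permRep F H).comp Q.subtype) I
      fun q v hv => (MulAction.mem_stabilizer_set.1 (hQI q.2) v).2 hv
  have hπ : π = leftConvolve (π (Pi.single 1 1)) := eq_leftConvolve_of_commute π
    fun h => hπQ ⟨_, hRQ (mulRight_mem_rightTranslations h)⟩
  set T := permRep F H g * π * permRep F H g⁻¹
  have hT : T = leftConvolve (T (Pi.single 1 1)) := eq_leftConvolve_of_commute T fun h => by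
    obtain ⟨q, hq, hqh⟩ := (Subgroup.mem_smul_pointwise_iff_exists _ _ _).1
      (hRQg (mulRight_mem_rightTranslations h))
    rw [← hqh, MulAut.smul_def, MulAut.conj_apply]
    exact (permRep F H).commute_conj (hπQ ⟨q, hq⟩) g
  refine ⟨π (Pi.single 1 1), T (Pi.single 1 1), ?_, ?_, ?_⟩
  · rw [← coe_leftConvolve, ← hπ, ← LinearMap.coe_range, hπI.range]
  · rw [← coe_leftConvolve, ← hT, ← hπI.range, LinearMap.coe_range]
    rw [Module.End.coe_mul, Module.End.coe_mul, coe_permRep, coe_permRep,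
      (MulAction.surjective g⁻¹).range_comp, Set.range_comp, Set.image_smul]
  · rw [isCayleyIso_iff, ← hπ, ← hT, ← Module.End.mul_eq_comp, ← Module.End.mul_eq_comp]
    simp only [T, mul_assoc, ← map_mul, inv_mul_cancel, map_one, mul_one]

theorem IsRightIdeal.exists_isPGroup_le_stabilizer {p : ℕ} [Fact p.Prime] (hH : IsPGroup p H)
    {I J : Submodule F (H → F)} (hI : IsRightIdeal I) (hJ : IsRightIdeal J) {g : Equiv.Perm H}
    (hg : (J : Set (H → F)) = g • (I : Set (H → F))) :
    ∃ (g' : Equiv.Perm H) (Q : Subgroup (Equiv.Perm H)),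
      (J : Set (H → F)) = g' • (I : Set (H → F)) ∧
      IsPGroup p Q ∧ Q ≤ MulAction.stabilizer (Equiv.Perm H) (I : Set (H → F)) ∧
      rightTranslations H ≤ Q ∧ rightTranslations H ≤ MulAut.conj g' • Q := by
  have hR := hH.rightTranslations
  have hRg : MulAut.conj g⁻¹ • rightTranslations H ≤
      MulAction.stabilizer (Equiv.Perm H) (I : Set (H → F)) := by
    rw [show (I : Set (H → F)) = g⁻¹ • (J : Set (H → F)) by rw [hg, inv_smul_smul],
      MulAction.stabilizer_smul_eq_stabilizer_map_conj]
    exact Subgroup.map_mono hJ.rightTranslations_le_stabilizer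
  obtain ⟨Q, hQI, hQ, hRQ, k, hk, hRgQ⟩ :=
    Subgroup.exists_isPGroup_le_and_le_conj_smul hR (hR.map _)
      hI.rightTranslations_le_stabilizer hRg
  refine ⟨g * k, Q, ?_, hQ, hQI, hRQ, ?_⟩
  · rw [mul_smul, MulAction.mem_stabilizer_iff.1 hk, hg]
  · rwa [map_mul, mul_smul, Subgroup.subset_pointwise_smul_iff, ← map_inv]

end

theorem solving_set_for_pgroup_codes_general
    {p : ℕ} (hp : p.Prime)
    {H F : Type*} [Group H] [Fintype H] (hH : IsPGroup p H)
    [Field F] (hchar : ringChar F ≠ p)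
    (S : Set (Equiv.Perm H))
    (hS : ∀ e e' : H → F, (∃ g : Equiv.Perm H, IsCayleyIso g e e') →
      ∃ s ∈ S, IsCayleyIso s e e') :
    ∀ I J : Submodule F (H → F), IsRightIdeal I → IsRightIdeal J →
      (∃ g : Equiv.Perm H, (J : Set (H → F)) = permAct g '' (I : Set (H → F))) →
      ∃ s ∈ S, (J : Set (H → F)) = permAct s '' (I : Set (H → F)) := by
  rintro I J hI hJ ⟨g, hg⟩
  have : Fact p.Prime := ⟨hp⟩
  obtain ⟨g', Q, hJ', hQ, hQI, hRQ, hRQg⟩ :=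
    hI.exists_isPGroup_le_stabilizer hH hJ (hg.trans (image_permAct g _))
  have : NeZero (Nat.card Q : F) := ⟨hQ.natCast_card_ne_zero hp hchar⟩
  obtain ⟨e, f, he, hf, hiso⟩ := exists_isCayleyIso_of_le_stabilizer I g' Q hQI hRQ hRQg
  obtain ⟨s, hs, hsef⟩ := hS e f ⟨g', hiso⟩
  refine ⟨s, hs, ?_⟩
  rw [image_permAct, hJ', hf, he, hsef.smul_range_convolve]

/-- Let `p` be a prime, `H` a finite `p`-group and `F` a finite field
of characteristic different from `p`.  If `S` is a solving set for every `F`-colored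
Cayley digraph over `H`, then `S` is a solving set for every right ideal of `F[H]`. -/
theorem solving_set_for_pgroup_codes
    {p : ℕ} (hp : p.Prime)
    {H F : Type*} [Group H] [Fintype H] [DecidableEq H] (hH : IsPGroup p H)
    [Field F] [Fintype F] (hchar : ringChar F ≠ p)
    (S : Set (Equiv.Perm H))
    (hS : ∀ e e' : H → F, (∃ g : Equiv.Perm H, IsCayleyIso g e e') →
      ∃ s ∈ S, IsCayleyIso s e e') :
    ∀ I J : Submodule F (H → F), IsRightIdeal I → IsRightIdeal J →
      (∃ g : Equiv.Perm H, (J : Set (H → F)) = permAct g '' (I : Set (H → F))) →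
      ∃ s ∈ S, (J : Set (H → F)) = permAct s '' (I : Set (H → F)) :=
  solving_set_for_pgroup_codes_general hp hH hchar S hS
end

section
/- Let H be a finite group and let X be any type equipped with an action of Sym(H) (a class of Cayley-type objects over H); for K ∈ X write Aut(K) for the stabilizer of K in Sym(H). Let K, L ∈ X with H_R ≤ Aut(K), H_R ≤ Aut(L), Aut(K) ≤ Aut(L), and suppose Aut(K) controls fusion of H_R in Aut(L). Then every solving set for K is a solving set for L. -/
/-- The group `H_R ≤ Sym(H)` of right translations `x ↦ x⬝h`. -/
def rightRegular (H : Type*) [Group H] : Subgroup (Equiv.Perm H) where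
  carrier := Set.range (Equiv.mulRight : H → Equiv.Perm H)
  one_mem' := ⟨1, by ext x; simp⟩
  mul_mem' := by
    rintro _ _ ⟨a, rfl⟩ ⟨b, rfl⟩
    exact ⟨b * a, by ext x; simp [mul_assoc]⟩
  inv_mem' := by
    rintro _ ⟨a, rfl⟩
    exact ⟨a⁻¹, by ext x; simp⟩

/-- `Y` controls fusion of `X` in `Z` (all three subgroups of `Sym(Ω)`). -/
def ControlsFusion {Ω : Type*} (X Y Z : Subgroup (Equiv.Perm Ω)) : Prop :=
  ∀ g : Equiv.Perm Ω, (∀ x ∈ X, g⁻¹ * x * g ∈ Z) →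
    ∃ z ∈ Z, ∀ x ∈ X, (g * z)⁻¹ * x * (g * z) ∈ Y

/-- Let `K, L` be Cayley objects over a finite group `H` (elements of
a type with a `Sym(H)`-action) with `Aut(K) ≤ Aut(L)` and `Aut(K)` controlling fusion
of `H_R` in `Aut(L)`.  Then every solving set for `K` is a solving set for `L`. -/
theorem solving_set_transfer_of_fusion_control
    {H : Type*} [Group H] [Fintype H]
    {Obj : Type*} [MulAction (Equiv.Perm H) Obj]
    (K L : Obj)
    (hK : rightRegular H ≤ MulAction.stabilizer (Equiv.Perm H) K)
    (hL : rightRegular H ≤ MulAction.stabilizer (Equiv.Perm H) L)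
    (hKL : MulAction.stabilizer (Equiv.Perm H) K ≤ MulAction.stabilizer (Equiv.Perm H) L)
    (hfus : ControlsFusion (rightRegular H) (MulAction.stabilizer (Equiv.Perm H) K)
      (MulAction.stabilizer (Equiv.Perm H) L))
    (S : Set (Equiv.Perm H))
    (hS : ∀ g : Equiv.Perm H,
      rightRegular H ≤ MulAction.stabilizer (Equiv.Perm H) (g • K) →
      ∃ s ∈ S, g • K = s • K) :
    ∀ g : Equiv.Perm H,
      rightRegular H ≤ MulAction.stabilizer (Equiv.Perm H) (g • L) →
      ∃ s ∈ S, g • L = s • L := by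
  intro g hg
  have key : ∀ x ∈ rightRegular H, g⁻¹ * x * g ∈ MulAction.stabilizer (Equiv.Perm H) L := by
    intro x hx
    have := hg hx
    simp only [MulAction.mem_stabilizer_iff] at this ⊢
    rw [mul_assoc, mul_smul, mul_smul, this, inv_smul_smul]
  obtain ⟨z, hz, hzconj⟩ := hfus g key
  have hgzK : rightRegular H ≤ MulAction.stabilizer (Equiv.Perm H) ((g * z) • K) := by
    intro x hx
    have := hzconj x hx
    simp only [MulAction.mem_stabilizer_iff] at this ⊢
    simp only [smul_smul]
    have h2 : (g * z) * ((g * z)⁻¹ * x * (g * z)) = x * (g * z) := by group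
    calc (x * (g * z)) • K = ((g * z) * ((g * z)⁻¹ * x * (g * z))) • K := by rw [h2]
      _ = (g * z) • K := by rw [mul_smul, this]
  obtain ⟨s, hs, hsK⟩ := hS (g * z) hgzK
  refine ⟨s, hs, ?_⟩
  have hzL : z • L = L := hz
  have hinv : (s⁻¹ * (g * z)) ∈ MulAction.stabilizer (Equiv.Perm H) K := by
    have : (s⁻¹ * (g * z)) • K = s⁻¹ • (g * z) • K := by rw [mul_smul]
    simp only [MulAction.mem_stabilizer_iff, this, hsK, inv_smul_smul]
  have hL2 : (s⁻¹ * (g * z)) • L = L := hKL hinv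
  calc g • L = (g * z) • L := by rw [mul_smul, hzL]
    _ = s • (s⁻¹ * (g * z)) • L := by rw [← mul_smul]; group
    _ = s • L := by rw [hL2]
end

section
/- Let H be a finite group and let X be any type equipped with an action of Sym(H); for K ∈ X write Aut(K) for the stabilizer of K in Sym(H). Let K, L ∈ X with H_R ≤ Aut(K), H_R ≤ Aut(L), Aut(K) ≤ Aut(L), and suppose Aut(K) controls fusion of H_R in Aut(L). If K is a CI-object over H, then L is a CI-object over H. -/
/-- Let `K, L` be Cayley objects over a finite group `H` with
`Aut(K) ≤ Aut(L)` and `Aut(K)` controlling fusion of `H_R` in `Aut(L)`.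
If `K` is a CI-object over `H`, then so is `L`. -/
theorem CI_transfer_of_fusion_control
    {H : Type*} [Group H] [Fintype H]
    {Obj : Type*} [MulAction (Equiv.Perm H) Obj]
    (K L : Obj)
    (hK : rightRegular H ≤ MulAction.stabilizer (Equiv.Perm H) K)
    (hL : rightRegular H ≤ MulAction.stabilizer (Equiv.Perm H) L)
    (hKL : MulAction.stabilizer (Equiv.Perm H) K ≤ MulAction.stabilizer (Equiv.Perm H) L)
    (hfus : ControlsFusion (rightRegular H) (MulAction.stabilizer (Equiv.Perm H) K)
      (MulAction.stabilizer (Equiv.Perm H) L))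
    (hCI : ∀ g : Equiv.Perm H,
      rightRegular H ≤ MulAction.stabilizer (Equiv.Perm H) (g • K) →
      ∃ σ : MulAut H, g • K = (σ.toEquiv : Equiv.Perm H) • K) :
    ∀ g : Equiv.Perm H,
      rightRegular H ≤ MulAction.stabilizer (Equiv.Perm H) (g • L) →
      ∃ σ : MulAut H, g • L = (σ.toEquiv : Equiv.Perm H) • L := by
  intro g hg
  have h1 : ∀ x ∈ rightRegular H, g⁻¹ * x * g ∈ MulAction.stabilizer (Equiv.Perm H) L := by
    intro x hx
    have hxg : x • (g • L) = g • L := hg hx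
    have : (g⁻¹ * x * g) • L = L := by
      rw [mul_smul, mul_smul, hxg, ← mul_smul, inv_mul_cancel, one_smul]
    exact this
  obtain ⟨z, hz, hzz⟩ := hfus g h1
  have h2 : rightRegular H ≤ MulAction.stabilizer (Equiv.Perm H) ((g * z) • K) := by
    intro x hx
    have hmem := hzz x hx
    have hmem' : ((g * z)⁻¹ * x * (g * z)) • K = K := hmem
    have : x • ((g * z) • K) = (g * z) • K := by
      have := congrArg (fun y => (g * z) • y) hmem'
      simpa [mul_smul] using this
    exact this
  obtain ⟨σ, hσ⟩ := hCI (g * z) h2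
  have h3 : ((σ.toEquiv : Equiv.Perm H)⁻¹ * (g * z)) • K = K := by
    rw [mul_smul, hσ, ← mul_smul, inv_mul_cancel, one_smul]
  have h4 : ((σ.toEquiv : Equiv.Perm H)⁻¹ * (g * z)) • L = L := hKL h3
  have h5 : (g * z) • L = (σ.toEquiv : Equiv.Perm H) • L := by
    have := congrArg (fun y => (σ.toEquiv : Equiv.Perm H) • y) h4
    simpa [mul_smul] using this
  refine ⟨σ, ?_⟩
  have hzL : z • L = L := hz
  rw [← h5, mul_smul, hzL]
end

section
/- Let Ω be a finite set and X ≤ Y ≤ Z ≤ Sym(Ω) be subgroups, where X acts regularly on Ω (transitively with trivial point stabilizers). Then Y controls fusion of X in Z if and only if for every subgroup X' ≤ Z that acts regularly on Ω and is isomorphic to X as an abstract group, there exists z ∈ Z with z^{-1}X'z ≤ Y. -/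
/-- A subgroup `X ≤ Sym(Ω)` is regular if it acts transitively on `Ω` with trivial
point stabilizers. -/
def IsRegularSubgroup {Ω : Type*} (X : Subgroup (Equiv.Perm Ω)) : Prop :=
  (∀ a b : Ω, ∃ x ∈ X, x a = b) ∧ (∀ x ∈ X, ∀ a : Ω, x a = a → x = 1)

/-- The orbit map at a point is a bijection for a regular subgroup. -/
lemma regular_bijective {Ω : Type*} (S : Subgroup (Equiv.Perm Ω))
    (h : IsRegularSubgroup S) (a : Ω) :
    Function.Bijective (fun s : S => (s : Equiv.Perm Ω) a) := by
  constructor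
  · intro s t hst
    have h1 : ((t : Equiv.Perm Ω)⁻¹ * s) a = a := by
      simp only at hst
      simp [Equiv.Perm.mul_apply, hst]
    have h2 := h.2 _ (mul_mem (inv_mem t.2) s.2) a h1
    have : (s : Equiv.Perm Ω) = t := by
      have := mul_left_cancel (a := (t : Equiv.Perm Ω)⁻¹)
        (b := (s : Equiv.Perm Ω)) (c := (t : Equiv.Perm Ω)) (by rw [h2]; group)
      exact this
    exact Subtype.ext this
  · intro b
    obtain ⟨x, hx, hxb⟩ := h.1 a b
    exact ⟨⟨x, hx⟩, hxb⟩

/-- If `X ≤ Y ≤ Z ≤ Sym(Ω)` with `X` regular, then `Y` controls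
fusion of `X` in `Z` iff every regular subgroup `X' ≤ Z` isomorphic to `X` is
conjugate by an element of `Z` into `Y`. -/
theorem controlsFusion_iff_regular_subgroups
    {Ω : Type*} [Fintype Ω]
    (X Y Z : Subgroup (Equiv.Perm Ω))
    (hXY : X ≤ Y) (hYZ : Y ≤ Z) (hreg : IsRegularSubgroup X) :
    ControlsFusion X Y Z ↔
      ∀ X' : Subgroup (Equiv.Perm Ω), X' ≤ Z → IsRegularSubgroup X' →
        Nonempty (X ≃* X') → ∃ z ∈ Z, ∀ x ∈ X', z⁻¹ * x * z ∈ Y := by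
  constructor
  · intro hCF X' hX'Z hX'reg ⟨φ⟩
    by_cases hΩ : Nonempty Ω
    · obtain ⟨a⟩ := hΩ
      let eX : X ≃ Ω := Equiv.ofBijective _ (regular_bijective X hreg a)
      let eX' : X' ≃ Ω := Equiv.ofBijective _ (regular_bijective X' hX'reg a)
      let f : X ≃ Ω := φ.toEquiv.trans eX'
      let g : Equiv.Perm Ω := f.symm.trans eX
      have hgapp : ∀ b : Ω, g b = ((f.symm b : X) : Equiv.Perm Ω) a := fun b => rfl
      have hfapp : ∀ x : X, f x = ((φ x : X') : Equiv.Perm Ω) a := fun x => rfl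
      have key : ∀ x : X, (x : Equiv.Perm Ω) * g = g * ((φ x : X') : Equiv.Perm Ω) := by
        intro x
        ext b
        set y : X := f.symm b with hy
        have hb : b = ((φ y : X') : Equiv.Perm Ω) a := by
          rw [← hfapp]; simp [hy]
        have lhs : ((x : Equiv.Perm Ω) * g) b = ((x * y : X) : Equiv.Perm Ω) a := by
          simp [Equiv.Perm.mul_apply, hgapp, ← hy]
        have hfr : f (x * y) = ((φ x : X') : Equiv.Perm Ω) b := by
          rw [hfapp, hb]
          simp [Equiv.Perm.mul_apply]
        have rhs : (g * ((φ x : X') : Equiv.Perm Ω)) b = ((x * y : X) : Equiv.Perm Ω) a := by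
          simp only [Equiv.Perm.mul_apply]
          rw [hgapp, ← hfr]
          simp
        rw [lhs, rhs]
      have keyconj : ∀ x : X, g⁻¹ * (x : Equiv.Perm Ω) * g = ((φ x : X') : Equiv.Perm Ω) := by
        intro x
        rw [mul_assoc, key x]
        group
      obtain ⟨z, hzZ, hz⟩ := hCF g (by
        intro x hx
        rw [keyconj ⟨x, hx⟩]
        exact hX'Z (φ ⟨x, hx⟩).2)
      refine ⟨z, hzZ, ?_⟩
      intro x' hx'
      set x : X := φ.symm ⟨x', hx'⟩ with hxdef
      have hφx : ((φ x : X') : Equiv.Perm Ω) = x' := by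
        rw [hxdef]; simp
      have := hz (x : Equiv.Perm Ω) x.2
      have heq : z⁻¹ * x' * z = (g * z)⁻¹ * (x : Equiv.Perm Ω) * (g * z) := by
        rw [← hφx, ← keyconj x]
        group
      rw [heq]
      exact this
    · -- Ω is empty: all permutations are the identity
      haveI : IsEmpty Ω := not_nonempty_iff.mp hΩ
      refine ⟨1, Z.one_mem, ?_⟩
      intro x hx
      have hx1 : x = 1 := Equiv.ext fun b => isEmptyElim b
      simp [hx1]
  · intro h g hg
    set X' : Subgroup (Equiv.Perm Ω) :=
      X.map ((MulAut.conj g⁻¹) : Equiv.Perm Ω →* Equiv.Perm Ω) with hX'def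
    have hmem : ∀ x ∈ X, g⁻¹ * x * g ∈ X' := by
      intro x hx
      refine ⟨x, hx, ?_⟩
      simp [MulAut.conj_apply]
    have hmem' : ∀ x' ∈ X', ∃ x ∈ X, g⁻¹ * x * g = x' := by
      intro x' hx'
      obtain ⟨x, hx, hxe⟩ := hx'
      refine ⟨x, hx, ?_⟩
      simpa [MulAut.conj_apply] using hxe
    have hX'Z : X' ≤ Z := by
      intro x' hx'
      obtain ⟨x, hx, rfl⟩ := hmem' x' hx'
      exact hg x hx
    have hX'reg : IsRegularSubgroup X' := by
      constructor
      · intro a b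
        obtain ⟨x, hx, hxab⟩ := hreg.1 (g a) (g b)
        refine ⟨g⁻¹ * x * g, hmem x hx, ?_⟩
        simp [Equiv.Perm.mul_apply, hxab]
      · intro x' hx' a ha
        obtain ⟨x, hx, rfl⟩ := hmem' x' hx'
        have hfix : x (g a) = g a := by
          have : g ((g⁻¹ * x * g) a) = g a := by rw [ha]
          simpa [Equiv.Perm.mul_apply] using this
        have := hreg.2 x hx (g a) hfix
        simp [this]
    have hiso : Nonempty (X ≃* X') := ⟨(MulAut.conj g⁻¹).subgroupMap X⟩
    obtain ⟨z, hzZ, hz⟩ := h X' hX'Z hX'reg hiso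
    refine ⟨z, hzZ, ?_⟩
    intro x hx
    have := hz (g⁻¹ * x * g) (hmem x hx)
    have heq : (g * z)⁻¹ * x * (g * z) = z⁻¹ * (g⁻¹ * x * g) * z := by group
    rw [heq]
    exact this
end

section
/- Let Ω be a finite set, p a prime, and G ≤ Sym(Ω) a p-group. Then the 2-closure G^(2) is also a p-group. -/
/-!
Induction on `|Ω|`. If some point has trivial stabilizer in `G`, an element of `G^(2)` agrees on
every pair `(α, β)` with one and the same element of `G`, so `G^(2) = G`. Otherwise a nontrivial
normal subgroup `N` of `G` with intransitive orbits exists (`N = G`, or in the transitive case a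
maximal subgroup containing a point stabilizer); its orbits form a `G`-invariant partition with
fewer blocks than points and blocks smaller than `Ω`. `G^(2)` preserves the partition, induces on
the set of blocks an element of the 2-closure of the group induced by `G`, and the kernel of this
action embeds into the product over the blocks of the 2-closures of the block constituents. All
of these are `p`-groups by induction.
-/

/-- The 2-closure of a permutation group `G ≤ Sym(Ω)`: all permutations mapping each
`G`-orbit on `Ω × Ω` onto itself. -/
def twoClosure {Ω : Type*} (G : Subgroup (Equiv.Perm Ω)) : Subgroup (Equiv.Perm Ω) where
  carrier := {g | ∀ α β : Ω, ∃ h ∈ G, g α = h α ∧ g β = h β}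
  one_mem' := fun α β => ⟨1, G.one_mem, rfl, rfl⟩
  mul_mem' := by
    intro a b ha hb α β
    obtain ⟨h, hh, h1, h2⟩ := hb α β
    obtain ⟨k, hk, k1, k2⟩ := ha (h α) (h β)
    exact ⟨k * h, G.mul_mem hk hh, by simp [Equiv.Perm.mul_apply, h1, k1],
      by simp [Equiv.Perm.mul_apply, h2, k2]⟩
  inv_mem' := by
    intro a ha α β
    obtain ⟨h, hh, h1, h2⟩ := ha (a⁻¹ α) (a⁻¹ β)
    refine ⟨h⁻¹, G.inv_mem hh, ?_, ?_⟩
    · have := congrArg (fun z => h⁻¹ z) h1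
      simpa using this.symm
    · have := congrArg (fun z => h⁻¹ z) h2
      simpa using this.symm

open Equiv MulAction
open scoped Pointwise

theorem IsPGroup.pi {p : ℕ} {ι : Type*} [Finite ι] {H : ι → Type*} [∀ i, Group (H i)]
    (h : ∀ i, IsPGroup p (H i)) : IsPGroup p (∀ i, H i) := by
  intro g
  choose k hk using fun i => h i (g i)
  obtain ⟨N, hN⟩ := (Set.finite_range k).bddAbove
  refine ⟨N, funext fun i => ?_⟩
  obtain ⟨m, hm⟩ := Nat.exists_eq_add_of_le (hN ⟨i, rfl⟩)
  rw [Pi.pow_apply, hm, pow_add, pow_mul, hk i, one_pow, Pi.one_apply]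

theorem IsPGroup.of_ker_of_forall_mem {p : ℕ} {G K : Type*} [Group G] [Group K] {H : Subgroup K}
    (hH : IsPGroup p H) (f : G →* K) (hf : ∀ g, f g ∈ H) (hker : IsPGroup p f.ker) :
    IsPGroup p G := by
  have hcomap := hH.comap_of_ker_isPGroup f hker
  rw [show H.comap f = ⊤ from eq_top_iff.mpr fun g _ => hf g] at hcomap
  exact hcomap.of_equiv Subgroup.topEquiv

section

variable {Ω : Type*}

theorem twoClosure_le_of_stabilizer_eq_bot {G : Subgroup (Perm Ω)} {α : Ω}
    (hα : stabilizer G α = ⊥) : twoClosure G ≤ G := by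
  intro g hg
  obtain ⟨h, hh, hgh, -⟩ := hg α α
  suffices g = h from this ▸ hh
  ext β
  obtain ⟨k, hk, hgk, hβ⟩ := hg α β
  have hfix : (⟨h, hh⟩⁻¹ * ⟨k, hk⟩ : G) ∈ stabilizer G α := by
    rw [mem_stabilizer_iff, mul_smul, inv_smul_eq_iff]
    exact hgk.symm.trans hgh
  rw [hα, Subgroup.mem_bot, inv_mul_eq_one, Subtype.mk.injEq] at hfix
  rw [hβ, hfix]

namespace Setoid

variable (r : Setoid Ω)

def invariantPerms : Subgroup (Perm Ω) where
  carrier := {g | ∀ x y, r x y ↔ r (g x) (g y)}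
  one_mem' _ _ := Iff.rfl
  mul_mem' hg hh x y := (hh x y).trans (hg _ _)
  inv_mem' {g} hg x y := by simpa using (hg (g⁻¹ x) (g⁻¹ y)).symm

def quotientPermHom : r.invariantPerms →* Perm (Quotient r) where
  toFun g := Quotient.congr g.1 g.2
  map_one' := by ext ⟨x⟩; rfl
  map_mul' _ _ := by ext ⟨x⟩; rfl

theorem mem_stabilizer_preimage_mk {g : Perm Ω} (hg : g ∈ r.invariantPerms) {x : Ω}
    {c : Quotient r} (hx : Quotient.mk r x = c) (hgx : r (g x) x) :
    g ∈ stabilizer (Perm Ω) (Quotient.mk r ⁻¹' {c}) := by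
  subst hx
  rw [mem_stabilizer_set]
  intro y
  simp only [Perm.smul_def, Set.mem_preimage, Set.mem_singleton_iff, Quotient.eq]
  exact ⟨fun h => (hg y x).mpr (r.trans h (r.symm hgx)), fun h => r.trans ((hg y x).mp h) hgx⟩

end Setoid

def constituent (G : Subgroup (Perm Ω)) (s : Set Ω) : Subgroup (Perm s) :=
  (toPermHom (stabilizer G s) s).range

def quotientConstituent (G : Subgroup (Perm Ω)) (r : Setoid Ω) : Subgroup (Perm (Quotient r)) :=
  (G.subgroupOf r.invariantPerms).map r.quotientPermHom

theorem IsPGroup.constituent {p : ℕ} {G : Subgroup (Perm Ω)} (hG : IsPGroup p G) (s : Set Ω) :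
    IsPGroup p (constituent G s) :=
  (hG.to_subgroup _).of_surjective _ (toPermHom _ _).rangeRestrict_surjective

theorem IsPGroup.quotientConstituent {p : ℕ} {G : Subgroup (Perm Ω)} (hG : IsPGroup p G)
    (r : Setoid Ω) : IsPGroup p (quotientConstituent G r) :=
  hG.comap_subtype.map _

section Blocks

variable {G : Subgroup (Perm Ω)} {r : Setoid Ω}

theorem twoClosure_le_invariantPerms (hGr : G ≤ r.invariantPerms) :
    twoClosure G ≤ r.invariantPerms := by
  intro g hg x y
  obtain ⟨h, hh, hx, hy⟩ := hg x y
  rw [hx, hy]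
  exact hGr hh x y

def twoClosureQuotientHom (hGr : G ≤ r.invariantPerms) : twoClosure G →* Perm (Quotient r) :=
  r.quotientPermHom.comp (Subgroup.inclusion (twoClosure_le_invariantPerms hGr))

theorem twoClosureQuotientHom_mem (hGr : G ≤ r.invariantPerms) (g : twoClosure G) :
    twoClosureQuotientHom hGr g ∈ twoClosure (quotientConstituent G r) := by
  rintro ⟨x⟩ ⟨y⟩
  obtain ⟨h, hh, hx, hy⟩ := g.2 x y
  exact ⟨r.quotientPermHom ⟨h, hGr hh⟩, ⟨⟨h, hGr hh⟩, hh, rfl⟩,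
    congrArg (Quotient.mk r) hx, congrArg (Quotient.mk r) hy⟩

theorem mem_ker_twoClosureQuotientHom (hGr : G ≤ r.invariantPerms) {g : twoClosure G} :
    g ∈ (twoClosureQuotientHom hGr).ker ↔ ∀ x, r ((g : Perm Ω) x) x := by
  rw [MonoidHom.mem_ker]
  constructor
  · exact fun h x => Quotient.exact (DFunLike.congr_fun h (Quotient.mk r x))
  · exact fun h => Equiv.ext fun q => Quotient.inductionOn q fun x => Quotient.sound (h x)

def restrictToClass (hGr : G ≤ r.invariantPerms) (c : Quotient r) :
    (twoClosureQuotientHom hGr).ker →* Perm (Quotient.mk r ⁻¹' {c}) :=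
  MonoidHom.mk' (fun g => (g : Perm Ω).subtypePerm fun x => by
      simp only [Set.mem_preimage, Set.mem_singleton_iff,
        Quotient.sound ((mem_ker_twoClosureQuotientHom hGr).mp g.2 x)])
    fun _ _ => rfl

theorem restrictToClass_mem (hGr : G ≤ r.invariantPerms) (c : Quotient r)
    (g : (twoClosureQuotientHom hGr).ker) :
    restrictToClass hGr c g ∈ twoClosure (constituent G (Quotient.mk r ⁻¹' {c})) := by
  rintro ⟨x, hx⟩ ⟨y, hy⟩
  obtain ⟨h, hh, hgx, hgy⟩ := g.1.2 x y
  have hstab : (⟨h, hh⟩ : G) ∈ stabilizer G (Quotient.mk r ⁻¹' {c}) :=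
    r.mem_stabilizer_preimage_mk (hGr hh) hx (hgx ▸ (mem_ker_twoClosureQuotientHom hGr).mp g.2 x)
  exact ⟨_, ⟨⟨⟨h, hh⟩, hstab⟩, rfl⟩, Subtype.ext hgx, Subtype.ext hgy⟩

def restrictToClasses (hGr : G ≤ r.invariantPerms) : (twoClosureQuotientHom hGr).ker →*
    ∀ c : Quotient r, twoClosure (constituent G (Quotient.mk r ⁻¹' {c})) :=
  MonoidHom.pi fun c => (restrictToClass hGr c).codRestrict _ (restrictToClass_mem hGr c)

theorem restrictToClasses_injective (hGr : G ≤ r.invariantPerms) :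
    Function.Injective (restrictToClasses hGr) := by
  rw [injective_iff_map_eq_one]
  intro g hg
  ext x
  exact congrArg (fun f => ((f (Quotient.mk r x)).1 ⟨x, rfl⟩).1) hg

theorem isPGroup_twoClosure_of_le_invariantPerms [Finite Ω] {p : ℕ}
    (hGr : G ≤ r.invariantPerms) (hquot : IsPGroup p (twoClosure (quotientConstituent G r)))
    (hclass : ∀ c, IsPGroup p (twoClosure (constituent G (Quotient.mk r ⁻¹' {c})))) :
    IsPGroup p (twoClosure G) :=
  hquot.of_ker_of_forall_mem _ (twoClosureQuotientHom_mem hGr)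
    ((IsPGroup.pi hclass).of_injective _ (restrictToClasses_injective hGr))

end Blocks

theorem Setoid.card_quotient_lt [Finite Ω] (r : Setoid Ω) {x y : Ω} (hxy : x ≠ y)
    (hr : r x y) : Nat.card (Quotient r) < Nat.card Ω := by
  classical
  have := Fintype.ofFinite Ω
  rw [Nat.card_eq_fintype_card, Nat.card_eq_fintype_card]
  exact Fintype.card_lt_of_surjective_not_injective _ Quotient.mk_surjective
    fun h => hxy (h (Quotient.sound hr))

theorem le_invariantPerms_orbitRel {G : Subgroup (Perm Ω)} (N : Subgroup G) [N.Normal] :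
    G ≤ (orbitRel N Ω).invariantPerms := by
  intro g hg x y
  change x ∈ orbit N y ↔ (⟨g, hg⟩ : G) • x ∈ orbit N ((⟨g, hg⟩ : G) • y)
  rw [← smul_orbit_eq_orbit_smul N y ⟨g, hg⟩]
  exact (Set.smul_mem_smul_set_iff (a := (⟨g, hg⟩ : G))).symm

/-- If `G` is transitive, a maximal subgroup `M ≥ G_α` is normal because `G` is nilpotent, and
`M` is intransitive because `G_α ≤ M` would otherwise give `G = M G_α = M`. -/
theorem exists_normal_ne_bot_not_isPretransitive [Finite Ω] {p : ℕ} [Fact p.Prime]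
    {G : Subgroup (Perm Ω)} (hG : IsPGroup p G) {α : Ω} (hα : stabilizer G α ≠ ⊥) :
    ∃ N : Subgroup G, N.Normal ∧ N ≠ ⊥ ∧ ¬ IsPretransitive N Ω := by
  by_cases htrans : IsPretransitive G Ω
  swap
  · refine ⟨⊤, inferInstance, ne_bot_of_le_ne_bot hα le_top, fun htop => htrans ?_⟩
    exact ⟨fun x y => let ⟨g, hg⟩ := htop.exists_smul_eq x y; ⟨g, hg⟩⟩
  have hα_ne_top : stabilizer G α ≠ ⊤ := by
    intro htop
    refine hα (eq_bot_iff.mpr fun g _ => Subtype.ext (Equiv.ext fun β => ?_))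
    obtain ⟨k, rfl⟩ := exists_smul_eq G α β
    have hfix : ∀ h : G, h • α = α := fun h => by
      rw [← mem_stabilizer_iff, htop]
      exact Subgroup.mem_top h
    change g • k • α = k • α
    rw [smul_smul, hfix, hfix]
  obtain ⟨M, hM, hαM⟩ := (eq_top_or_exists_le_coatom (stabilizer G α)).resolve_left hα_ne_top
  have : Group.IsNilpotent G := hG.isNilpotent
  have hM_normal : M.Normal :=
    Subgroup.NormalizerCondition.normal_of_coatom M Group.normalizerCondition_of_isNilpotent hM
  refine ⟨M, hM_normal, ne_bot_of_le_ne_bot hα hαM, fun hM_trans => hM.1 ?_⟩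
  rw [← stabilizer_orbit_eq hαM, orbit_eq_univ, stabilizer_univ]

theorem exists_invariant_setoid_card_lt [Finite Ω] {p : ℕ} [Fact p.Prime]
    {G : Subgroup (Perm Ω)} (hG : IsPGroup p G) {α : Ω} (hα : stabilizer G α ≠ ⊥) :
    ∃ r : Setoid Ω, G ≤ r.invariantPerms ∧ Nat.card (Quotient r) < Nat.card Ω ∧
      ∀ c, Nat.card (Quotient.mk r ⁻¹' {c}) < Nat.card Ω := by
  obtain ⟨N, hN, hN_ne_bot, hN_trans⟩ := exists_normal_ne_bot_not_isPretransitive hG hα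
  refine ⟨orbitRel N Ω, le_invariantPerms_orbitRel N, ?_, fun c => ?_⟩
  · obtain ⟨n, hn⟩ := N.ne_bot_iff_exists_ne_one.mp hN_ne_bot
    obtain ⟨x, hx⟩ : ∃ x, n • x ≠ x := by
      by_contra! h
      exact hn (Subtype.ext (Subtype.ext (Equiv.ext h)))
    exact (orbitRel N Ω).card_quotient_lt hx (mem_orbit x n)
  · induction c using Quotient.inductionOn with | h x => ?_
    obtain ⟨y, hy⟩ : ∃ y, y ∉ orbit N x := by
      by_contra! h
      exact hN_trans ((isPretransitive_iff_orbit_eq_univ x).mpr (Set.eq_univ_of_forall h))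
    exact Finite.card_subtype_lt (p := (· ∈ Quotient.mk _ ⁻¹' {Quotient.mk _ x}))
      fun h => hy (orbitRel_apply.mp (Quotient.exact h))

theorem isPGroup_twoClosure [Finite Ω] {p : ℕ} [Fact p.Prime] {G : Subgroup (Perm Ω)}
    (hG : IsPGroup p G) : IsPGroup p (twoClosure G) := by
  induction hn : Nat.card Ω using Nat.strong_induction_on generalizing Ω with
  | _ n ih =>
  subst hn
  rcases isEmpty_or_nonempty Ω with _ | ⟨⟨α⟩⟩
  · exact .of_subsingleton _ _
  by_cases hα : stabilizer G α = ⊥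
  · exact hG.to_le (twoClosure_le_of_stabilizer_eq_bot hα)
  obtain ⟨r, hGr, hquot, hclass⟩ := exists_invariant_setoid_card_lt hG hα
  exact isPGroup_twoClosure_of_le_invariantPerms hGr
    (ih _ hquot (hG.quotientConstituent r) rfl) fun c => ih _ (hclass c) (hG.constituent _) rfl

end

/-- The 2-closure of a `p`-subgroup of `Sym(Ω)` is again a
`p`-group. -/
theorem two_closure_of_p_group_is_p_group
    {Ω : Type*} [Fintype Ω] {p : ℕ} (hp : p.Prime)
    (G : Subgroup (Equiv.Perm Ω)) (hG : IsPGroup p G) :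
    IsPGroup p (twoClosure G) :=
  haveI := Fact.mk hp
  isPGroup_twoClosure hG
end
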